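/- If a linear weighted graph G with integer weight constraints bounded in absolute value by M-1 is realizable (i.e., admits a monotone real-valued time-stamping satisfying all difference constraints), then G admits a slowly monotone realization, i.e., a realization ts such that the integer parts of time-stamps of consecutive nodes differ by at most M-1. -/
import Mathlib


open Finset

/-- A weighted constraint edge: `ts tgt - ts src ◁ wt` where ◁ is `<` if `strict` else `≤`. -/
structure WEdge where
  src : ℕ
  strict : Bool
  wt : ℤ
  tgt : ℕ
deriving DecidableEq

/-- `ts` satisfies the constraint of edge `e`. -/
def satEdge (ts : ℕ → ℝ) (e : WEdge) : Prop :=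
  if e.strict then ts e.tgt - ts e.src < (e.wt : ℝ) else ts e.tgt - ts e.src ≤ (e.wt : ℝ)

/-- `ts` realizes the linear weighted graph on vertices `{1,…,n}` with edge set `E`:
monotone w.r.t. the linear order and all difference constraints hold. -/
def Realizes (n : ℕ) (E : Finset WEdge) (ts : ℕ → ℝ) : Prop :=
  (∀ u v : ℕ, 1 ≤ u → u ≤ v → v ≤ n → ts u ≤ ts v) ∧ ∀ e ∈ E, satEdge ts e

/-- Integer parts of consecutive time-stamps differ by at least 0 and at most `M - 1`. -/
def SlowlyMonotone (M : ℤ) (n : ℕ) (ts : ℕ → ℝ) : Prop :=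
  ∀ i : ℕ, 1 ≤ i → i < n → 0 ≤ ⌊ts (i + 1)⌋ - ⌊ts i⌋ ∧ ⌊ts (i + 1)⌋ - ⌊ts i⌋ ≤ M - 1

/-- All edges of the graph have endpoints in `{1,…,n}`. -/
def InGraph (n : ℕ) (E : Finset WEdge) : Prop :=
  ∀ e ∈ E, 1 ≤ e.src ∧ e.src ≤ n ∧ 1 ≤ e.tgt ∧ e.tgt ≤ n

/-- `M` weight-bounded: all weights have absolute value at most `M - 1`. -/
def WtBounded (M : ℤ) (E : Finset WEdge) : Prop := ∀ e ∈ E, |e.wt| ≤ M - 1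

/-- `dtsm(u,v) = (tsm v - tsm u) mod M`. -/
def dtsm (M : ℤ) (tsm : ℕ → ℤ) (u v : ℕ) : ℤ := (tsm v - tsm u) % M

/-- `dtsm⁺(u,v)`, for `u ≤ v`: the cumulative sum of consecutive `dtsm`'s, capped at `M`. -/
def dtsmP (M : ℤ) (tsm : ℕ → ℤ) (u v : ℕ) : ℤ :=
  min M (∑ i ∈ Finset.Ico u v, dtsm M tsm i (i + 1))

/-- Antisymmetric extension of `dtsm⁺` to arbitrary pairs. -/
def dtsmE (M : ℤ) (tsm : ℕ → ℤ) (u v : ℕ) : ℤ :=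
  if u ≤ v then dtsmP M tsm u v else - dtsmP M tsm v u

/-- `(u,v)` is `tsm`-big. -/
def TsmBig (M : ℤ) (tsm : ℕ → ℤ) (u v : ℕ) : Prop :=
  ∃ w1 w2 : ℕ, u ≤ w1 ∧ w1 < w2 ∧ w2 ≤ v ∧ M ≤ dtsm M tsm u w1 + dtsm M tsm w1 w2

/-- `tsm` is a time-stamping modulo `M` on vertices `{1,…,n}`. -/
def TSM (M : ℤ) (n : ℕ) (tsm : ℕ → ℤ) : Prop :=
  ∀ v, 1 ≤ v → v ≤ n → 0 ≤ tsm v ∧ tsm v < M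

/-- `tsm` weakly satisfies the graph (forward/backward conditions). -/
def WeaklySat (M : ℤ) (E : Finset WEdge) (tsm : ℕ → ℤ) : Prop :=
  ∀ e ∈ E,
    (e.src ≤ e.tgt → ¬ TsmBig M tsm e.src e.tgt ∧ dtsm M tsm e.src e.tgt ≤ e.wt) ∧
    (e.tgt < e.src → TsmBig M tsm e.tgt e.src ∨ - e.wt ≤ dtsm M tsm e.tgt e.src)

/-- `(u,v) ∈ geqFr`: fractional part of `ts u` must be ≥ that of `ts v`. -/
def geqFr (M : ℤ) (tsm : ℕ → ℤ) (E : Finset WEdge) (u v : ℕ) : Prop :=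
  (∃ e ∈ E, e.src = u ∧ e.tgt = v ∧ dtsmE M tsm u v = e.wt) ∨
  (v + 1 = u ∧ dtsmE M tsm u v = 0)

/-- `(u,v) ∈ gtFr`: fractional part of `ts u` must be > that of `ts v`. -/
def gtFr (M : ℤ) (tsm : ℕ → ℤ) (E : Finset WEdge) (u v : ℕ) : Prop :=
  ∃ e ∈ E, e.strict = true ∧ e.src = u ∧ e.tgt = v ∧ dtsmE M tsm u v = e.wt

open Classical in
/-- Number of `gtFr` edges used by the path `p 0, p 1, …, p k`. -/
noncomputable def gtCount (M : ℤ) (tsm : ℕ → ℤ) (E : Finset WEdge) (k : ℕ) (p : ℕ → ℕ) : ℕ :=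
  ((Finset.range k).filter (fun i => gtFr M tsm E (p i) (p (i + 1)))).card

noncomputable def fixTs (M : ℤ) (ts : ℕ → ℝ) : ℕ → ℝ
  | 0 => ts 0
  | (i+1) =>
    min (ts (i+1) - ts i + fixTs M ts i)
        ((⌊fixTs M ts i⌋ : ℝ) + M - (1 - Int.fract (fixTs M ts i)) / 2)

lemma fixTs_succ (M : ℤ) (ts : ℕ → ℝ) (i : ℕ) :
    fixTs M ts (i+1) =
      min (ts (i+1) - ts i + fixTs M ts i)
        ((⌊fixTs M ts i⌋ : ℝ) + M - (1 - Int.fract (fixTs M ts i)) / 2) := rfl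

lemma cap_ge (M : ℤ) (hM : 1 ≤ M) (x : ℝ) :
    x ≤ (⌊x⌋ : ℝ) + M - (1 - Int.fract x) / 2 := by
  have h1 := Int.fract_lt_one x
  have h2 : (⌊x⌋ : ℝ) + Int.fract x = x := Int.floor_add_fract x
  have hM' : (1 : ℝ) ≤ M := by exact_mod_cast hM
  linarith

lemma fixTs_step_mono (M : ℤ) (hM : 1 ≤ M) (ts : ℕ → ℝ) (i : ℕ)
    (h : ts i ≤ ts (i+1)) : fixTs M ts i ≤ fixTs M ts (i+1) := by
  rw [fixTs_succ]
  exact le_min (by linarith) (cap_ge M hM _)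

lemma fixTs_D_step (M : ℤ) (ts : ℕ → ℝ) (i : ℕ) :
    ts i - fixTs M ts i ≤ ts (i+1) - fixTs M ts (i+1) := by
  have := min_le_left (ts (i+1) - ts i + fixTs M ts i)
      ((⌊fixTs M ts i⌋ : ℝ) + M - (1 - Int.fract (fixTs M ts i)) / 2)
  rw [← fixTs_succ] at this
  linarith

lemma fixTs_D_mono (M : ℤ) (ts : ℕ → ℝ) {u v : ℕ} (h : u ≤ v) :
    ts u - fixTs M ts u ≤ ts v - fixTs M ts v := by
  induction v, h using Nat.le_induction with
  | base => exact le_rfl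
  | succ k hk ih => exact ih.trans (fixTs_D_step M ts k)

lemma fixTs_floor_step (M : ℤ) (ts : ℕ → ℝ) (i : ℕ) :
    ⌊fixTs M ts (i+1)⌋ ≤ ⌊fixTs M ts i⌋ + (M - 1) := by
  have h1 : fixTs M ts (i+1) ≤
      (⌊fixTs M ts i⌋ : ℝ) + M - (1 - Int.fract (fixTs M ts i)) / 2 := by
    rw [fixTs_succ]; exact min_le_right _ _
  have h2 := Int.fract_lt_one (fixTs M ts i)
  have h3 : fixTs M ts (i+1) < ((⌊fixTs M ts i⌋ + M : ℤ) : ℝ) := by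
    push_cast; linarith
  have := Int.floor_lt.mpr h3
  omega

lemma fixTs_clamp (M : ℤ) (ts : ℕ → ℝ) (i : ℕ)
    (h : ts i - fixTs M ts i < ts (i+1) - fixTs M ts (i+1)) :
    (M : ℝ) - 1 < fixTs M ts (i+1) - fixTs M ts i := by
  have hb : fixTs M ts (i+1) =
      (⌊fixTs M ts i⌋ : ℝ) + M - (1 - Int.fract (fixTs M ts i)) / 2 := by
    rcases le_or_gt (ts (i+1) - ts i + fixTs M ts i)
        ((⌊fixTs M ts i⌋ : ℝ) + M - (1 - Int.fract (fixTs M ts i)) / 2) with hc | hc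
    · exfalso
      rw [fixTs_succ, min_eq_left hc] at h
      linarith
    · rw [fixTs_succ, min_eq_right hc.le]
  have h2 := Int.fract_lt_one (fixTs M ts i)
  have h4 : (⌊fixTs M ts i⌋ : ℝ) + Int.fract (fixTs M ts i) = fixTs M ts i :=
    Int.floor_add_fract _
  rw [hb]; linarith


theorem realizable_exists_slowlyMonotone_realization (M : ℤ) (hM : 1 ≤ M) (n : ℕ)
    (E : Finset WEdge) (hG : InGraph n E) (hW : WtBounded M E)
    (ts : ℕ → ℝ) (h : Realizes n E ts) :
    ∃ ts' : ℕ → ℝ, Realizes n E ts' ∧ SlowlyMonotone M n ts' := by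
  obtain ⟨hmono, hsat⟩ := h
  set g := fixTs M ts with hg
  -- monotonicity of g within [1, n]
  have hgmono : ∀ u v : ℕ, 1 ≤ u → u ≤ v → v ≤ n → g u ≤ g v := by
    intro u v hu huv hvn
    induction v, huv using Nat.le_induction with
    | base => exact le_rfl
    | succ k hk ih =>
      have hkn : k ≤ n := by omega
      have h1 : ts k ≤ ts (k+1) := hmono k (k+1) (by omega) (by omega) hvn
      exact (ih hkn).trans (fixTs_step_mono M hM ts k h1)
  -- key: if the shift strictly increases between v and u, there is a clamp step
  have hclampstep : ∀ v u : ℕ, v ≤ u → ts v - g v < ts u - g u →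
      ∃ j, v ≤ j ∧ j < u ∧ ts j - g j < ts (j+1) - g (j+1) := by
    intro v u hvu
    induction u, hvu using Nat.le_induction with
    | base => intro hlt; exact absurd hlt (lt_irrefl _)
    | succ k hk ih =>
      intro hlt
      rcases lt_or_ge (ts v - g v) (ts k - g k) with hc | hc
      · obtain ⟨j, h1, h2, h3⟩ := ih hc
        exact ⟨j, h1, by omega, h3⟩
      · have hdk : ts v - g v ≤ ts k - g k := fixTs_D_mono M ts hk
        have heq : ts k - g k = ts v - g v := le_antisymm hc hdk
        exact ⟨k, hk, by omega, by rw [heq]; exact hlt⟩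
  refine ⟨g, ⟨fun u v hu huv hvn => hgmono u v hu huv hvn, ?_⟩, ?_⟩
  · -- edge constraints
    intro e he
    obtain ⟨hs1, hs2, ht1, ht2⟩ := hG e he
    have hedge := hsat e he
    have hwt : 1 - M ≤ e.wt := by have := hW e he; rw [abs_le] at this; omega
    have hwtR : (1 : ℝ) - M ≤ (e.wt : ℝ) := by exact_mod_cast hwt
    rcases le_or_gt e.src e.tgt with hdir | hdir
    · -- forward edge: g tgt - g src ≤ ts tgt - ts src
      have hD := fixTs_D_mono M ts hdir
      unfold satEdge at hedge ⊢
      split_ifs at hedge ⊢ <;> linarith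
    · -- backward edge
      rcases eq_or_lt_of_le (fixTs_D_mono M ts hdir.le) with hD | hD
      · -- shift equal: difference unchanged
        have : g e.tgt - g e.src = ts e.tgt - ts e.src := by
          change fixTs M ts e.tgt - fixTs M ts e.src = _
          linarith [hD]
        unfold satEdge at hedge ⊢
        split_ifs at hedge ⊢ <;> linarith
      · -- a clamp occurred between tgt and src
        obtain ⟨j, h1, h2, h3⟩ := hclampstep e.tgt e.src hdir.le hD
        have hjump := fixTs_clamp M ts j h3
        have hA : g e.tgt ≤ g j := hgmono e.tgt j ht1 h1 (by omega)
        have hB : g (j+1) ≤ g e.src := hgmono (j+1) e.src (by omega) (by omega) hs2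
        have hMR : (1 : ℝ) ≤ M := by exact_mod_cast hM
        have hbig : (M : ℝ) - 1 < g e.src - g e.tgt := by
          change _ < fixTs M ts e.src - fixTs M ts e.tgt
          have : (M:ℝ) - 1 < fixTs M ts (j+1) - fixTs M ts j := hjump
          calc (M:ℝ) - 1 < fixTs M ts (j+1) - fixTs M ts j := hjump
          _ ≤ fixTs M ts e.src - fixTs M ts e.tgt := by
              have hA' : fixTs M ts e.tgt ≤ fixTs M ts j := hA
              have hB' : fixTs M ts (j+1) ≤ fixTs M ts e.src := hB
              linarith
        unfold satEdge
        split <;> simp <;> linarith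
  · -- slowly monotone
    intro i hi hin
    constructor
    · have h1 : ts i ≤ ts (i+1) := hmono i (i+1) hi (by omega) (by omega)
      have h2 := fixTs_step_mono M hM ts i h1
      have h3 := Int.floor_le_floor h2
      simp only [hg]
      omega
    · have h4 := fixTs_floor_step M ts i
      simp only [hg]
      omega
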